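/- Fix integers n ≥ 2, d ≥ 2 and L ≥ 2 with L ≤ n. If the matrix Q_γ is positive semidefinite for every γ ∈ ℕ^E with Σγ = d−2, then the polynomial f_d is convex on the standard simplex Δ_m. -/

import Mathlib

/-!
Write `f_d(x) = ∑_u w(u) ∏ᵢ x(uᵢ)`, the sum over tuples `u : Fin d → E`. Along a line
`r ↦ x + r • b` this is a polynomial in `r` whose second derivative at `r` is
`∑_u w(u) ∑_{i ≠ j} b(uᵢ) b(uⱼ) ∏_{k ∉ {i, j}} z(u_k)` with `z = x + r • b`. Grouping the triples
`(u, i, j)` by the multiplicity vector `γ` of `u` off `{i, j}` (so that `Σγ = d - 2`) turns this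
into `∑_γ z^γ · bᵀ Q_γ b`, which is nonnegative as soon as `z ≥ 0` and every `Q_γ` is positive
semidefinite. So `f_d` is convex on the whole nonnegative orthant, in particular on the simplex.
-/

open Finset

/-- The set of `L`-element subsets ("edges") of `[n]`, modeled over `Fin n`. -/
abbrev EdgeT (n L : ℕ) := {e : Finset (Fin n) // e.card = L}

/-- The polynomial `f_d(x) = Σ_{(e_1,...,e_d) ∈ E^d} ∏_{i=1}^d x_{e_i} / |e_1 ∪ ⋯ ∪ e_i|`. -/
noncomputable def fPoly (n L d : ℕ) (x : EdgeT n L → ℝ) : ℝ :=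
  ∑ t : Fin d → EdgeT n L, ∏ i : Fin d,
    x (t i) / ((((Finset.univ.filter fun j : Fin d => j ≤ i)).biUnion fun j => (t j).1).card : ℝ)

/-- The standard simplex `Δ_m ⊆ ℝ^E`. -/
def stdSimplex' (n L : ℕ) : Set (EdgeT n L → ℝ) :=
  {x | (∀ e, 0 ≤ x e) ∧ ∑ e, x e = 1}

/-- `b_α = Σ ∏_{i=1}^d 1/|e_1 ∪ ⋯ ∪ e_i|`, the sum over all `d`-tuples of edges in which
each edge `e` occurs exactly `α e` times. -/
noncomputable def bcoefF (n L d : ℕ) (α : EdgeT n L → ℕ) : ℝ :=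
  ∑ t : Fin d → EdgeT n L,
    if (∀ e, (Finset.univ.filter fun i => t i = e).card = α e) then
      ∏ i : Fin d,
        (1 : ℝ) / ((((Finset.univ.filter fun j : Fin d => j ≤ i)).biUnion
          fun j => (t j).1).card : ℝ)
    else 0

/-- The standard unit vector `v_e ∈ ℕ^E`. -/
def vF (n L : ℕ) (e : EdgeT n L) : EdgeT n L → ℕ := fun f => if f = e then 1 else 0

/-- The coefficient matrix `Q_γ` of the Hessian of `f_d` in the monomial basis. -/
noncomputable def Qmat (n L d : ℕ) (γ : EdgeT n L → ℕ) : EdgeT n L → EdgeT n L → ℝ :=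
  fun i j =>
    if i = j then
      ((γ i + 1) * (γ i + 2) : ℕ) * bcoefF n L d (fun e => γ e + 2 * vF n L i e)
    else
      ((γ i + 1) * (γ j + 1) : ℕ) * bcoefF n L d (fun e => γ e + vF n L i e + vF n L j e)

theorem convexOn_of_forall_convexOn_Icc_line {E : Type*} [AddCommGroup E] [Module ℝ E] {s : Set E}
    {f : E → ℝ} (hs : Convex ℝ s)
    (h : ∀ x ∈ s, ∀ y ∈ s, ConvexOn ℝ (Set.Icc 0 1) fun r : ℝ => f (x + r • (y - x))) :
    ConvexOn ℝ s f := by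
  refine ⟨hs, fun x hx y hy a b ha hb hab => ?_⟩
  have h01 := (h x hx y hy).2 (Set.left_mem_Icc.2 zero_le_one) (Set.right_mem_Icc.2 zero_le_one)
    ha hb hab
  have hline : a • x + b • y = x + b • (y - x) := by
    rw [eq_sub_of_add_eq hab]; module
  simpa [hline] using h01

namespace Polynomial

theorem convexOn_eval_of_deriv2_nonneg {D : Set ℝ} (hD : Convex ℝ D) (P : ℝ[X])
    (h : ∀ r ∈ interior D, 0 ≤ (derivative (derivative P)).eval r) :
    ConvexOn ℝ D fun r => P.eval r := by
  have hderiv : _root_.deriv (fun r => P.eval r) = fun r => (derivative P).eval r := by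
    ext; exact P.deriv
  refine convexOn_of_deriv2_nonneg hD P.continuous.continuousOn P.differentiable.differentiableOn
    (hderiv ▸ (derivative P).differentiable.differentiableOn) fun r hr => ?_
  rw [Function.iterate_succ_apply', Function.iterate_one, hderiv, Polynomial.deriv]
  exact h r hr

theorem eval_derivative_derivative_prod_linear {R κ : Type*} [CommRing R]
    [DecidableEq κ] (s : Finset κ) (a b : κ → R) (r : R) :
    (derivative (derivative (∏ k ∈ s, (C (a k) + C (b k) * X)))).eval r =
      ∑ p ∈ s.offDiag, b p.1 * b p.2 * ∏ k ∈ s \ {p.1, p.2}, (a k + b k * r) := by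
  have hlin : ∀ k, derivative (C (a k) + C (b k) * X) = C (b k) := fun k => by simp
  simp only [derivative_prod_finset, hlin, derivative_sum, derivative_mul, derivative_C, mul_zero,
    add_zero, eval_finsetSum, eval_mul, eval_prod, eval_C, eval_add, eval_X]
  rw [sum_finset_product' _ s (fun i => s.erase i) (fun p => by simp [and_comm, ne_comm])
    (f := fun i j => b i * b j * ∏ k ∈ s \ {i, j}, (a k + b k * r))]
  refine sum_congr rfl fun i _ => ?_
  rw [sum_mul]
  refine sum_congr rfl fun j _ => ?_
  rw [sdiff_insert, sdiff_singleton_eq_erase, erase_right_comm]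
  ring

end Polynomial

section TupleForm

variable {ι : Type*} {d : ℕ}

section Multiplicity

variable [DecidableEq ι]

def multOn (s : Finset (Fin d)) (u : Fin d → ι) (e : ι) : ℕ := #{k ∈ s | u k = e}

/-- `∂_e ∂_f x^α = hessMult α e f • x^(α - v_e - v_f)`. -/
def hessMult (α : ι → ℕ) (e f : ι) : ℕ := α e * (α f - if e = f then 1 else 0)

theorem multOn_univ_eq {i j : Fin d} (hij : i ≠ j) (u : Fin d → ι) :
    multOn univ u = multOn (univ \ {i, j}) u + Pi.single (u i) 1 + Pi.single (u j) 1 := by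
  ext e
  simp only [multOn, Pi.add_apply, Pi.single_apply, @eq_comm _ e]
  conv_lhs => rw [← sdiff_union_of_subset (subset_univ {i, j})]
  rw [filter_union, card_union_of_disjoint (disjoint_filter_filter sdiff_disjoint), add_assoc,
    filter_insert, filter_singleton]
  by_cases hi : u i = e <;> by_cases hj : u j = e <;> simp [hi, hj, hij]

theorem card_offDiag_filter_eq_hessMult (u : Fin d → ι) (e f : ι) :
    #{p ∈ univ.offDiag | u p.1 = e ∧ u p.2 = f} = hessMult (multOn univ u) e f := by
  rw [hessMult, multOn, multOn]
  split_ifs with hef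
  · subst hef
    rw [Nat.mul_sub_one, ← offDiag_card]
    congr 1
    ext p
    simp only [mem_filter, mem_offDiag, mem_univ, true_and]
    tauto
  · rw [Nat.sub_zero, ← card_product]
    congr 1
    ext p
    simp only [mem_filter, mem_offDiag, mem_product, mem_univ, true_and]
    exact ⟨fun h => h.2, fun h => ⟨fun hp => hef (h.1 ▸ h.2 ▸ congrArg u hp), h⟩⟩

end Multiplicity

variable [Fintype ι]

def tupleForm (w : (Fin d → ι) → ℝ) (x : ι → ℝ) : ℝ := ∑ u, w u * ∏ i, x (u i)

open Polynomial in
noncomputable def tupleFormLine (w : (Fin d → ι) → ℝ) (a b : ι → ℝ) : ℝ[X] :=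
  ∑ u, C (w u) * ∏ i, (C (a (u i)) + C (b (u i)) * X)

open Polynomial in
theorem tupleForm_add_smul_eq_eval (w : (Fin d → ι) → ℝ) (a b : ι → ℝ) (r : ℝ) :
    tupleForm w (a + r • b) = (tupleFormLine w a b).eval r := by
  simp only [tupleForm, tupleFormLine, eval_finsetSum, eval_mul, eval_prod, eval_C, eval_add,
    eval_X, Pi.add_apply, Pi.smul_apply, smul_eq_mul, mul_comm r]

open Polynomial in
theorem eval_derivative_derivative_tupleFormLine (w : (Fin d → ι) → ℝ) (a b : ι → ℝ) (r : ℝ) :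
    (derivative (derivative (tupleFormLine w a b))).eval r =
      ∑ u, w u * ∑ p ∈ univ.offDiag,
        b (u p.1) * b (u p.2) * ∏ k ∈ univ \ {p.1, p.2}, (a + r • b) (u k) := by
  simp only [tupleFormLine, derivative_sum, derivative_C_mul, eval_finsetSum, eval_mul, eval_C,
    eval_derivative_derivative_prod_linear, Pi.add_apply, Pi.smul_apply, smul_eq_mul, mul_comm r]

variable [DecidableEq ι]

theorem prod_comp_eq_prod_pow_multOn {M : Type*} [CommMonoid M] (s : Finset (Fin d))
    (u : Fin d → ι) (z : ι → M) : ∏ k ∈ s, z (u k) = ∏ e, z e ^ multOn s u e := by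
  simp_rw [multOn, ← prod_const]
  exact (prod_fiberwise' s u z).symm

theorem sum_multOn (s : Finset (Fin d)) (u : Fin d → ι) : ∑ e, multOn s u e = #s :=
  (card_eq_sum_card_fiberwise fun k _ => mem_univ (u k)).symm

theorem multOn_sdiff_pair_mem_piAntidiag {i j : Fin d} (hij : i ≠ j)
    (u : Fin d → ι) : multOn (univ \ {i, j}) u ∈ piAntidiag univ (d - 2) := by
  rw [mem_piAntidiag, sum_multOn, card_sdiff_of_subset (subset_univ _), card_pair hij, card_univ,
    Fintype.card_fin]
  exact ⟨rfl, fun e _ => mem_univ e⟩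

theorem sum_offDiag_filter_prod_eq_sum_hessMult (z : ι → ℝ) (u : Fin d → ι) (e f : ι) :
    ∑ p ∈ univ.offDiag with u p.1 = e ∧ u p.2 = f, ∏ k ∈ univ \ {p.1, p.2}, z (u k) =
      ∑ γ ∈ piAntidiag univ (d - 2), if multOn univ u = γ + Pi.single e 1 + Pi.single f 1 then
        (hessMult (γ + Pi.single e 1 + Pi.single f 1) e f : ℝ) * ∏ m, z m ^ γ m else 0 := by
  set P := ({p ∈ univ.offDiag | u p.1 = e ∧ u p.2 = f} : Finset (Fin d × Fin d))
  have hP : ∀ p ∈ P, p.1 ≠ p.2 ∧ u p.1 = e ∧ u p.2 = f := fun p hp => by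
    simpa [P, and_assoc] using hp
  calc ∑ p ∈ P, ∏ k ∈ univ \ {p.1, p.2}, z (u k)
      = ∑ p ∈ P, ∑ γ ∈ piAntidiag univ (d - 2),
          if multOn (univ \ {p.1, p.2}) u = γ then ∏ m, z m ^ γ m else 0 :=
        sum_congr rfl fun p hp => by
          rw [sum_ite_eq, if_pos (multOn_sdiff_pair_mem_piAntidiag (hP p hp).1 u),
            prod_comp_eq_prod_pow_multOn]
    _ = ∑ p ∈ P, ∑ γ ∈ piAntidiag univ (d - 2),
          if multOn univ u = γ + Pi.single e 1 + Pi.single f 1 then ∏ m, z m ^ γ m else 0 := by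
        refine sum_congr rfl fun p hp => sum_congr rfl fun γ _ => ?_
        obtain ⟨hne, rfl, rfl⟩ := hP p hp
        simp only [multOn_univ_eq hne u, add_left_inj]
    _ = ∑ γ ∈ piAntidiag univ (d - 2), #P •
          if multOn univ u = γ + Pi.single e 1 + Pi.single f 1 then ∏ m, z m ^ γ m else 0 := by
        rw [sum_comm]
        simp only [sum_const]
    _ = _ := sum_congr rfl fun γ _ => by
        split_ifs with h
        · rw [card_offDiag_filter_eq_hessMult, h, nsmul_eq_mul]
        · exact smul_zero _

def tupleCoeff (w : (Fin d → ι) → ℝ) (α : ι → ℕ) : ℝ := ∑ u, if multOn univ u = α then w u else 0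

def hessCoeff (w : (Fin d → ι) → ℝ) (γ : ι → ℕ) (e f : ι) : ℝ :=
  hessMult (γ + Pi.single e 1 + Pi.single f 1) e f *
    tupleCoeff w (γ + Pi.single e 1 + Pi.single f 1)

theorem sum_offDiag_mul_prod_eq_sum_hessMult (z b : ι → ℝ) (u : Fin d → ι) :
    ∑ p ∈ univ.offDiag, b (u p.1) * b (u p.2) * ∏ k ∈ univ \ {p.1, p.2}, z (u k) =
      ∑ γ ∈ piAntidiag univ (d - 2), ∑ e, ∑ f,
        if multOn univ u = γ + Pi.single e 1 + Pi.single f 1 then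
          b e * b f * hessMult (γ + Pi.single e 1 + Pi.single f 1) e f * ∏ m, z m ^ γ m
        else 0 := by
  rw [← sum_fiberwise univ.offDiag (fun p => (u p.1, u p.2)), Fintype.sum_prod_type]
  simp only [Prod.mk.injEq]
  have hfiber : ∀ e f, ∑ p ∈ univ.offDiag with u p.1 = e ∧ u p.2 = f,
      b (u p.1) * b (u p.2) * ∏ k ∈ univ \ {p.1, p.2}, z (u k) =
      ∑ γ ∈ piAntidiag univ (d - 2),
        if multOn univ u = γ + Pi.single e 1 + Pi.single f 1 then
          b e * b f * hessMult (γ + Pi.single e 1 + Pi.single f 1) e f * ∏ m, z m ^ γ m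
        else 0 := fun e f => by
    rw [sum_congr rfl fun p hp => by rw [(mem_filter.1 hp).2.1, (mem_filter.1 hp).2.2], ← mul_sum,
      sum_offDiag_filter_prod_eq_sum_hessMult, mul_sum]
    simp only [mul_ite, mul_zero, mul_assoc]
  simp only [hfiber]
  conv_rhs => rw [sum_comm]
  refine sum_congr rfl fun e _ => ?_
  exact sum_comm

theorem sum_tuple_offDiag_eq_sum_hessCoeff (w : (Fin d → ι) → ℝ) (z b : ι → ℝ) :
    ∑ u, w u * ∑ p ∈ univ.offDiag, b (u p.1) * b (u p.2) * ∏ k ∈ univ \ {p.1, p.2}, z (u k) =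
      ∑ γ ∈ piAntidiag univ (d - 2),
        (∏ e, z e ^ γ e) * ∑ e, ∑ f, b e * hessCoeff w γ e f * b f := by
  simp only [sum_offDiag_mul_prod_eq_sum_hessMult, mul_sum]
  rw [sum_comm]
  refine sum_congr rfl fun γ _ => ?_
  rw [sum_comm]
  refine sum_congr rfl fun e _ => ?_
  rw [sum_comm]
  refine sum_congr rfl fun f _ => ?_
  simp only [hessCoeff, tupleCoeff, mul_sum, sum_mul, mul_ite, ite_mul, mul_zero, zero_mul]
  refine sum_congr rfl fun u _ => ?_
  split_ifs <;> ring

theorem convexOn_tupleForm (w : (Fin d → ι) → ℝ)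
    (hw : ∀ γ : ι → ℕ, ∑ e, γ e = d - 2 → ∀ y : ι → ℝ,
      0 ≤ ∑ i, ∑ j, y i * hessCoeff w γ i j * y j) :
    ConvexOn ℝ (Set.Ici 0) (tupleForm w) := by
  refine convexOn_of_forall_convexOn_Icc_line (convex_Ici 0) fun x hx y hy => ?_
  simp only [tupleForm_add_smul_eq_eval]
  refine Polynomial.convexOn_eval_of_deriv2_nonneg (convex_Icc 0 1) _ fun r hr => ?_
  rw [interior_Icc] at hr
  have hz : ∀ e, 0 ≤ (x + r • (y - x)) e := fun e => by
    have hxe : 0 ≤ x e := hx e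
    have hye : 0 ≤ y e := hy e
    simp only [Pi.add_apply, Pi.smul_apply, Pi.sub_apply, smul_eq_mul]
    nlinarith [hr.1, hr.2]
  rw [eval_derivative_derivative_tupleFormLine, sum_tuple_offDiag_eq_sum_hessCoeff]
  exact sum_nonneg fun γ hγ => mul_nonneg (prod_nonneg fun e _ => pow_nonneg (hz e) _)
    (hw γ (mem_piAntidiag.1 hγ).1 _)

end TupleForm

noncomputable def unionWeight (n L d : ℕ) (u : Fin d → EdgeT n L) : ℝ :=
  ∏ i : Fin d, (1 : ℝ) / (({j | j ≤ i} : Finset (Fin d)).biUnion fun j => (u j).1).card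

theorem fPoly_eq_tupleForm (n L d : ℕ) : fPoly n L d = tupleForm (unionWeight n L d) := by
  ext x
  refine sum_congr rfl fun u _ => ?_
  rw [unionWeight, ← prod_mul_distrib]
  exact prod_congr rfl fun i _ => (one_div_mul_eq_div _ _).symm

theorem bcoefF_eq_tupleCoeff (n L d : ℕ) : bcoefF n L d = tupleCoeff (unionWeight n L d) := by
  ext α
  simp only [bcoefF, tupleCoeff, funext_iff]
  rfl

theorem Qmat_eq_hessCoeff (n L d : ℕ) (γ : EdgeT n L → ℕ) :
    Qmat n L d γ = hessCoeff (unionWeight n L d) γ := by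
  have hv : ∀ e, vF n L e = Pi.single e 1 := fun e => by
    ext f; simp [vF, Pi.single_apply]
  ext i j
  simp only [Qmat, hessCoeff, hessMult, bcoefF_eq_tupleCoeff, hv]
  split_ifs with hij
  · subst hij
    have hα : (fun e => γ e + 2 * (Pi.single i 1 : EdgeT n L → ℕ) e) =
        γ + Pi.single i 1 + Pi.single i 1 := by
      ext e; simp only [Pi.add_apply]; ring
    rw [hα]
    congr 2
    simp only [Pi.add_apply, Pi.single_eq_same, Nat.add_sub_cancel]
    ring
  · congr 2
    simp [hij, Ne.symm hij]

theorem fPoly_convexOn_of_Qmat_PSD_general (n L d : ℕ)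
    (hQ : ∀ γ : EdgeT n L → ℕ, (∑ e, γ e = d - 2) →
      ∀ y : EdgeT n L → ℝ, 0 ≤ ∑ i : EdgeT n L, ∑ j : EdgeT n L, y i * Qmat n L d γ i j * y j) :
    ConvexOn ℝ (stdSimplex' n L) (fPoly n L d) := by
  rw [fPoly_eq_tupleForm]
  refine (convexOn_tupleForm _ fun γ hγ y => ?_).subset (fun x hx => hx.1)
    (convex_stdSimplex ℝ _)
  simpa only [Qmat_eq_hessCoeff] using hQ γ hγ y

/-- If every coefficient matrix `Q_γ` (for `Σγ = d−2`) is positive semidefinite, then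
`f_d` is convex on the standard simplex. -/
theorem fPoly_convexOn_of_Qmat_PSD (n L d : ℕ) (hn : 2 ≤ n) (hL : 2 ≤ L) (hLn : L ≤ n)
    (hd : 2 ≤ d)
    (hQ : ∀ γ : EdgeT n L → ℕ, (∑ e, γ e = d - 2) →
      ∀ y : EdgeT n L → ℝ, 0 ≤ ∑ i : EdgeT n L, ∑ j : EdgeT n L, y i * Qmat n L d γ i j * y j) :
    ConvexOn ℝ (stdSimplex' n L) (fPoly n L d) :=
  fPoly_convexOn_of_Qmat_PSD_general n L d hQ
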